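/- arXiv:2603.16836 — 5 statements merged into one kernel-verified Lean document; each statement's English description precedes it below -/
import Mathlib

section
/- (Subadditivity of rk* in distinct degrees) Let g and h be polynomials over a field F (in the same variables) with deg(g) ≠ deg(h). Then rk*(g + h) ≤ rk*(g) + rk*(h) (with the convention that the inequality is trivially true if rk*(g) or rk*(h) is infinite). -/
open MvPolynomial

/-- Discrete derivative of `f : V → F` in direction `v`: `Δ_v f (x) = f (x+v) - f x`. -/
def discDeriv {V F : Type*} [Add V] [Sub F] (v : V) (f : V → F) : V → F :=
  fun x => f (x + v) - f x

/-- Iterated discrete derivative `Δ^d_{v} f = Δ_{v (d-1)} ⋯ Δ_{v 0} f`. -/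
def iterDDeriv {V F : Type*} [Add V] [Sub F] : (d : ℕ) → (Fin d → V) → (V → F) → V → F
  | 0, _, f => f
  | d + 1, v, f => discDeriv (v (Fin.last d)) (iterDDeriv d (fun i => v i.castSucc) f)

/-- Complex bias `𝔟(f)` of a function with respect to an additive character `χ`. -/
noncomputable def cbias {F α : Type*} [AddGroup F] [Fintype α] (χ : AddChar F ℂ)
    (f : α → F) : ℂ :=
  (Fintype.card α : ℂ)⁻¹ * ∑ x, χ (f x)

/-- Bias `bias(f) = |𝔟(f)|`. -/
noncomputable def bias {F α : Type*} [AddGroup F] [Fintype α] (χ : AddChar F ℂ)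
    (f : α → F) : ℝ :=
  ‖cbias χ f‖

/-- `bias(Δ^d f)`: the bias of the order-`d` discrete derivative of `f`,
averaged over the base point and all `d` directions. -/
noncomputable def biasDD {F : Type*} [AddGroup F] [Fintype F] {n : ℕ} (χ : AddChar F ℂ)
    (d : ℕ) (f : (Fin n → F) → F) : ℝ :=
  bias χ (fun p : (Fin n → F) × (Fin d → Fin n → F) => iterDDeriv d p.2 f p.1)

/-- Formal directional derivative `∂_c f = Σ_i c_i ∂f/∂x_i`. -/
noncomputable def dirDeriv {F : Type*} [CommSemiring F] {n : ℕ} (c : Fin n → F)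
    (f : MvPolynomial (Fin n) F) : MvPolynomial (Fin n) F :=
  ∑ i, MvPolynomial.C (c i) * MvPolynomial.pderiv i f

/-- A rank decomposition of length `r` for a form `g` of degree `k`:
`g = Σ_{i=1}^r a_i b_i` with `a_i, b_i` forms of positive degrees summing to `k`. -/
def HasRankDecomp {F : Type*} [CommSemiring F] {n : ℕ} (k : ℕ) (g : MvPolynomial (Fin n) F)
    (r : ℕ) : Prop :=
  ∃ (a b : Fin r → MvPolynomial (Fin n) F) (da db : Fin r → ℕ),
    g = ∑ i, a i * b i ∧
      ∀ i, (a i).IsHomogeneous (da i) ∧ (b i).IsHomogeneous (db i) ∧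
        0 < da i ∧ 0 < db i ∧ da i + db i = k

/-- The rank (Schmidt rank/strength) of a form `g` of degree `k`, as an extended natural. -/
noncomputable def formRank {F : Type*} [CommSemiring F] {n : ℕ} (k : ℕ)
    (g : MvPolynomial (Fin n) F) : ℕ∞ :=
  sInf {N : ℕ∞ | ∃ r : ℕ, N = r ∧ HasRankDecomp k g r}

/-- A `rk*`-decomposition of length `r` of a polynomial `f`: `f = Σ_{i=1}^r α_i β_i`
with `α_i, β_i` non-constant, `deg α_i ≤ deg β_i`, `deg (α_i β_i) ≤ deg f`, and the
degree-1 factors `α_i` of the products of full degree are affinely independent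
(i.e. their homogeneous linear parts are linearly independent). -/
def HasRkStarDecomp {F : Type*} [Field F] {n : ℕ} (f : MvPolynomial (Fin n) F)
    (r : ℕ) : Prop :=
  ∃ a b : Fin r → MvPolynomial (Fin n) F,
    f = ∑ i, a i * b i ∧
    (∀ i, 1 ≤ (a i).totalDegree) ∧
    (∀ i, (a i).totalDegree ≤ (b i).totalDegree) ∧
    (∀ i, (a i * b i).totalDegree ≤ f.totalDegree) ∧
    LinearIndependent F
      (fun i : {i : Fin r // (a i).totalDegree = 1 ∧ (a i * b i).totalDegree = f.totalDegree} =>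
        MvPolynomial.homogeneousComponent 1 (a i.1))

/-- The rank `rk*` of a polynomial: the least length of a `rk*`-decomposition (`⊤` if none). -/
noncomputable def rkStar {F : Type*} [Field F] {n : ℕ} (f : MvPolynomial (Fin n) F) : ℕ∞ :=
  sInf {N : ℕ∞ | ∃ r : ℕ, N = r ∧ HasRkStarDecomp f r}

/-- A polynomial in the `d` blocks of variables `Fin d × Fin n` is multilinear with respect
to the set `I` of blocks if each monomial in its support has exactly one variable from each
block in `I` and no variables from blocks outside `I`. -/
def IsMultilinearOn {F : Type*} [CommSemiring F] {d n : ℕ} (I : Finset (Fin d))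
    (T : MvPolynomial (Fin d × Fin n) F) : Prop :=
  ∀ m ∈ T.support, (∀ t, t ∈ I → ∑ j : Fin n, m (t, j) = 1) ∧
    (∀ t, t ∉ I → ∀ j, m (t, j) = 0)

/-- A partition-rank decomposition of length `r` of a `d`-linear form `T`. -/
def HasPRDecomp {F : Type*} [CommSemiring F] {d n : ℕ}
    (T : MvPolynomial (Fin d × Fin n) F) (r : ℕ) : Prop :=
  ∃ (R Q : Fin r → MvPolynomial (Fin d × Fin n) F) (I : Fin r → Finset (Fin d)),
    T = ∑ i, R i * Q i ∧
    ∀ i, (I i).Nonempty ∧ I i ≠ Finset.univ ∧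
      IsMultilinearOn (I i) (R i) ∧ IsMultilinearOn (I i)ᶜ (Q i)

/-- The partition rank of a multilinear form, as an extended natural. -/
noncomputable def partitionRank {F : Type*} [CommSemiring F] {d n : ℕ}
    (T : MvPolynomial (Fin d × Fin n) F) : ℕ∞ :=
  sInf {N : ℕ∞ | ∃ r : ℕ, N = r ∧ HasPRDecomp T r}

/-! Concatenate decompositions of `g` and `h`, where `deg h < deg g`. Every product coming from
`h` has degree below `deg (g + h) = deg g`, so the affine-independence condition of the
concatenation only involves the linear factors coming from `g`. -/

namespace MvPolynomial

variable {F : Type*} [Field F] {n : ℕ}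

theorem rkStar_le_of_hasRkStarDecomp {f : MvPolynomial (Fin n) F} {r : ℕ}
    (hf : HasRkStarDecomp f r) : rkStar f ≤ r :=
  sInf_le ⟨r, rfl, hf⟩

theorem exists_hasRkStarDecomp_of_rkStar_ne_top {f : MvPolynomial (Fin n) F}
    (hf : rkStar f ≠ ⊤) : ∃ r : ℕ, rkStar f = r ∧ HasRkStarDecomp f r := by
  have hne : {N : ℕ∞ | ∃ r : ℕ, N = r ∧ HasRkStarDecomp f r}.Nonempty :=
    Set.nonempty_iff_ne_empty.2 fun h => hf (by rw [rkStar, h, sInf_empty])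
  exact csInf_mem hne

theorem rkStar_le_add_of_hasRkStarDecomp_add {f g h : MvPolynomial (Fin n) F}
    (hadd : ∀ r s, HasRkStarDecomp g r → HasRkStarDecomp h s → HasRkStarDecomp f (r + s)) :
    rkStar f ≤ rkStar g + rkStar h := by
  rcases eq_or_ne (rkStar g) ⊤ with hg | hg
  · simp [hg]
  rcases eq_or_ne (rkStar h) ⊤ with hh | hh
  · simp [hh]
  obtain ⟨r, hr, hgr⟩ := exists_hasRkStarDecomp_of_rkStar_ne_top hg
  obtain ⟨s, hs, hhs⟩ := exists_hasRkStarDecomp_of_rkStar_ne_top hh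
  rw [hr, hs, ← Nat.cast_add]
  exact rkStar_le_of_hasRkStarDecomp (hadd r s hgr hhs)

theorem HasRkStarDecomp.add_of_totalDegree_lt {g h : MvPolynomial (Fin n) F} {r s : ℕ}
    (hlt : h.totalDegree < g.totalDegree) (hg : HasRkStarDecomp g r)
    (hh : HasRkStarDecomp h s) : HasRkStarDecomp (g + h) (r + s) := by
  obtain ⟨ag, bg, hg_eq, hag, hagbg, hgdeg, hgind⟩ := hg
  obtain ⟨ah, bh, hh_eq, hah, hahbh, hhdeg, -⟩ := hh
  have hdeg_add : (g + h).totalDegree = g.totalDegree :=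
    totalDegree_add_eq_left_of_totalDegree_lt hlt
  refine ⟨Fin.append ag ah, Fin.append bg bh, ?_, ?_, ?_, ?_, ?_⟩
  · simp [Fin.sum_univ_add, hg_eq, hh_eq]
  · intro i; induction i using Fin.addCases <;> simp [hag, hah]
  · intro i; induction i using Fin.addCases <;> simp [hagbg, hahbh]
  · intro i
    rw [hdeg_add]
    induction i using Fin.addCases with
    | left j => simpa using hgdeg j
    | right j => simpa using (hhdeg j).trans hlt.le
  · have hfull : {i | (Fin.append ag ah i).totalDegree = 1 ∧
        (Fin.append ag ah i * Fin.append bg bh i).totalDegree = (g + h).totalDegree} ⊆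
        Fin.castAdd s '' {j | (ag j).totalDegree = 1 ∧
          (ag j * bg j).totalDegree = g.totalDegree} := by
      intro i hi
      induction i using Fin.addCases with
      | left j => exact ⟨j, by simpa [hdeg_add] using hi, rfl⟩
      | right j =>
        simp only [Set.mem_ofPred_eq, Fin.append_right, hdeg_add] at hi
        exact absurd hi.2 ((hhdeg j).trans_lt hlt).ne
    exact (LinearIndepOn.image_of_comp (Fin.castAdd s)
      (fun i => homogeneousComponent 1 (Fin.append ag ah i))
      (by simp only [Function.comp_def, Fin.append_left]; exact hgind)).mono hfull

end MvPolynomial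

theorem stmt5 {F : Type*} [Field F] {n : ℕ} (g h : MvPolynomial (Fin n) F)
    (hdeg : g.totalDegree ≠ h.totalDegree) :
    rkStar (g + h) ≤ rkStar g + rkStar h := by
  rcases hdeg.lt_or_gt with hlt | hlt
  · rw [add_comm g, add_comm (rkStar g)]
    exact rkStar_le_add_of_hasRkStarDecomp_add fun _ _ hh hg => hh.add_of_totalDegree_lt hlt hg
  · exact rkStar_le_add_of_hasRkStarDecomp_add fun _ _ hg hh => hg.add_of_totalDegree_lt hlt hh
end

section
/- (Lower-degree correlation) Let F be a finite field with q elements, and let f : F^n → F be a polynomial map of degree k ≥ 3 with rk*(f) = r finite. Then there exists a polynomial map P : F^n → F of degree at most k − 2 such that bias(f − P) ≥ q^{−2r}; that is, cor_{<k−1}(f) ≥ q^{−2·rk*(f)}. -/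
open MvPolynomial

/-!
Write `f = ∑ αᵢ βᵢ` with `r = rk* f` terms. Replacing each product by `(αᵢ - u)(βᵢ - v)`, or by
`αᵢ (βᵢ - u)` when `αᵢ` is linear and `αᵢ βᵢ` has full degree `k` (so that `deg βᵢ = k - 1`),
changes `f` by a polynomial `P` of degree at most `k - 2`. Averaged over all shifts
`(u, v) ∈ (F × F)^r`, the character sums defining `𝔟(f - P)` factor over the terms: a term of the
first kind contributes `q⁻¹`, and the `s` terms of the second kind together contribute the density
`q^{-s}` of the common zeros of the `αᵢ`, which are affinely independent. So the average of
`𝔟(f - P)` is `q^{-r}`, and some shift has bias at least `q^{-r} ≥ q^{-2r}`.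
-/

lemma AddChar.map_sum_eq_prod {ι A M : Type*} [AddCommMonoid A] [CommMonoid M]
    (ψ : AddChar A M) (s : Finset ι) (g : ι → A) : ψ (∑ i ∈ s, g i) = ∏ i ∈ s, ψ (g i) := by
  classical
  induction s using Finset.induction_on with
  | empty => simp
  | insert i s hi ih =>
    rw [Finset.sum_insert hi, Finset.prod_insert hi, AddChar.map_add_eq_mul, ih]

lemma AddChar.sum_pi_map_sum {ι A R : Type*} [Fintype ι] [DecidableEq ι] {κ : ι → Type*}
    [∀ i, Fintype (κ i)] [AddCommMonoid A] [CommSemiring R] (ψ : AddChar A R)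
    (φ : ∀ i, κ i → A) : ∑ x : ∀ i, κ i, ψ (∑ i, φ i (x i)) = ∏ i, ∑ y, ψ (φ i y) := by
  simp_rw [AddChar.map_sum_eq_prod, Fintype.prod_sum]

namespace MvPolynomial

variable {σ R : Type*} [CommSemiring R]

lemma eq_C_add_homogeneousComponent_one {p : MvPolynomial σ R} (hp : p.totalDegree ≤ 1) :
    p = C (coeff 0 p) + homogeneousComponent 1 p := by
  conv_lhs => rw [← sum_homogeneousComponent p]
  rw [← homogeneousComponent_zero, Finset.sum_subset
    (Finset.range_subset_range.2 (show p.totalDegree + 1 ≤ 2 by omega))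
    fun i _ hi => homogeneousComponent_eq_zero i p (by simp at hi; omega)]
  simp [Finset.sum_range_succ]

lemma IsHomogeneous.exists_eq_sum_smul_X [Fintype σ] {ℓ : MvPolynomial σ R}
    (h : ℓ.IsHomogeneous 1) : ∃ c : σ → R, ℓ = ∑ j, c j • X j := by
  have : ℓ ∈ Submodule.span R (Set.range X) := by
    rw [← homogeneousSubmodule_one_eq_span_X]
    exact (mem_homogeneousSubmodule 1 ℓ).2 h
  obtain ⟨c, hc⟩ := (Submodule.mem_span_range_iff_exists_fun R).1 this
  exact ⟨c, hc.symm⟩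

end MvPolynomial

section CharacterSums

variable {F : Type*} [Field F] [Fintype F] {χ : AddChar F ℂ}

lemma sum_addChar_mul_sub (a b : F) :
    ∑ u : F × F, χ (a * (b - u.1)) = Fintype.card F * ∑ t : F, χ (t * a) := by
  have h : ∑ s : F, χ (a * (b - s)) = ∑ t : F, χ (t * a) :=
    Fintype.sum_equiv (Equiv.subLeft b) _ _ fun t => by simp [mul_comm]
  simp only [Fintype.sum_prod_type, Finset.sum_const, Finset.card_univ, nsmul_eq_mul]
  rw [← Finset.mul_sum, h]

variable [DecidableEq F]

lemma sum_addChar_sub_mul_sub (hχ : χ ≠ 1) (a b : F) :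
    ∑ u : F × F, χ ((a - u.1) * (b - u.2)) = Fintype.card F := by
  rw [Fintype.sum_prod_type]
  have h : ∀ s, ∑ t : F, χ ((a - s) * (b - t)) = ∑ t : F, χ (t * (a - s)) :=
    fun s => Fintype.sum_equiv (Equiv.subLeft b) _ _ fun t => by simp [mul_comm]
  simp_rw [h, AddChar.sum_mulShift _ (AddChar.IsPrimitive.of_ne_one hχ), sub_eq_zero]
  simp

variable {σ : Type*} [Fintype σ] [DecidableEq σ]

lemma sum_addChar_eval_eq_zero (hχ : χ ≠ 1) {p : MvPolynomial σ F} (hp : p.totalDegree ≤ 1)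
    (hp₁ : homogeneousComponent 1 p ≠ 0) : ∑ x : σ → F, χ (eval x p) = 0 := by
  obtain ⟨c, hc⟩ := (homogeneousComponent_isHomogeneous 1 p).exists_eq_sum_smul_X
  obtain ⟨j, hj⟩ : ∃ j, c j ≠ 0 := by
    by_contra! h
    exact hp₁ (by simp [hc, h])
  have heval : ∀ x : σ → F, χ (eval x p) = χ (coeff 0 p) * χ (∑ i, x i * c i) := by
    intro x
    conv_lhs => rw [eq_C_add_homogeneousComponent_one hp, hc]
    simp [← AddChar.map_add_eq_mul, mul_comm]
  simp_rw [heval, ← Finset.mul_sum]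
  rw [AddChar.sum_pi_map_sum χ fun i y => y * c i, Finset.prod_eq_zero (Finset.mem_univ j),
    mul_zero]
  simp [AddChar.sum_mulShift _ (AddChar.IsPrimitive.of_ne_one hχ), hj]

/-- Each factor `∑ t, χ (t * ℓ i x)` is `q` or `0` according as `ℓ i` vanishes at `x` or not, so
this counts the common zeros of the `ℓ i`. -/
lemma sum_prod_sum_addChar_mul_eval {ι : Type*} [Fintype ι] [DecidableEq ι] (hχ : χ ≠ 1)
    {ℓ : ι → MvPolynomial σ F} (hdeg : ∀ i, (ℓ i).totalDegree ≤ 1)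
    (hlin : LinearIndependent F fun i => homogeneousComponent 1 (ℓ i)) :
    ∑ x : σ → F, ∏ i, ∑ t : F, χ (t * eval x (ℓ i)) =
      (Fintype.card F : ℂ) ^ Fintype.card σ := by
  have hterm : ∀ t : ι → F, ∑ x : σ → F, χ (eval x (∑ i, t i • ℓ i)) =
      if t = 0 then (Fintype.card F : ℂ) ^ Fintype.card σ else 0 := by
    intro t
    split_ifs with ht
    · simp [ht]
    · refine sum_addChar_eval_eq_zero hχ ?_ fun h => ht ?_
      · exact (totalDegree_finsetSum _ _).trans
          (Finset.sup_le fun i _ => (totalDegree_smul_le _ _).trans (hdeg i))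
      · simp only [map_sum, map_smul] at h
        exact funext (Fintype.linearIndependent_iff.1 hlin t h)
  calc ∑ x : σ → F, ∏ i, ∑ t : F, χ (t * eval x (ℓ i))
      = ∑ t : ι → F, ∑ x : σ → F, χ (eval x (∑ i, t i • ℓ i)) := by
        rw [Finset.sum_comm]
        refine Finset.sum_congr rfl fun x _ => ?_
        rw [← AddChar.sum_pi_map_sum]
        simp
    _ = _ := by
        rw [Fintype.sum_congr _ _ hterm]
        simp

end CharacterSums

section Averaging

variable {F σ ι : Type*} [Field F] [Fintype F] [DecidableEq F] {χ : AddChar F ℂ}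

noncomputable def shiftedTerm (s : ι → Prop) [DecidablePred s] (a b : ι → MvPolynomial σ F)
    (i : ι) (u : F × F) : MvPolynomial σ F :=
  if s i then a i * (b i - C u.1) else (a i - C u.1) * (b i - C u.2)

lemma sum_addChar_eval_shiftedTerm (hχ : χ ≠ 1) (s : ι → Prop) [DecidablePred s]
    (a b : ι → MvPolynomial σ F) (i : ι) (x : σ → F) :
    ∑ u : F × F, χ (eval x (shiftedTerm s a b i u)) =
      Fintype.card F * if s i then ∑ t : F, χ (t * eval x (a i)) else 1 := by
  unfold shiftedTerm
  split_ifs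
  · simpa using sum_addChar_mul_sub (eval x (a i)) (eval x (b i))
  · simpa using sum_addChar_sub_mul_sub hχ (eval x (a i)) (eval x (b i))

variable [Fintype σ] [DecidableEq σ] [Fintype ι] [DecidableEq ι]

lemma sum_sum_addChar_eval_sum_shiftedTerm (hχ : χ ≠ 1) {s : ι → Prop} [DecidablePred s]
    {a : ι → MvPolynomial σ F} (b : ι → MvPolynomial σ F)
    (hdeg : ∀ i, s i → (a i).totalDegree ≤ 1)
    (hlin : LinearIndependent F fun i : {i // s i} => homogeneousComponent 1 (a i)) :
    ∑ g : ι → F × F, ∑ x : σ → F, χ (eval x (∑ i, shiftedTerm s a b i (g i))) =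
      (Fintype.card F : ℂ) ^ Fintype.card ι * (Fintype.card F : ℂ) ^ Fintype.card σ := by
  have hcount := sum_prod_sum_addChar_mul_eval hχ (fun i : {i // s i} => hdeg i i.2) hlin
  rw [Finset.sum_comm, ← hcount, Finset.mul_sum]
  refine Finset.sum_congr rfl fun x _ => ?_
  simp_rw [map_sum]
  rw [AddChar.sum_pi_map_sum χ fun i u => eval x (shiftedTerm s a b i u)]
  simp_rw [sum_addChar_eval_shiftedTerm hχ]
  rw [Finset.prod_mul_distrib, Finset.prod_const, Finset.card_univ]
  rw [← Finset.prod_filter, Finset.prod_subtype (p := s) _ fun i => by simp]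

lemma exists_le_bias_sum_shiftedTerm (hχ : χ ≠ 1) {s : ι → Prop} [DecidablePred s]
    {a : ι → MvPolynomial σ F} (b : ι → MvPolynomial σ F)
    (hdeg : ∀ i, s i → (a i).totalDegree ≤ 1)
    (hlin : LinearIndependent F fun i : {i // s i} => homogeneousComponent 1 (a i)) :
    ∃ g : ι → F × F, ((Fintype.card F : ℝ) ^ Fintype.card ι)⁻¹ ≤
      bias χ (fun x => eval x (∑ i, shiftedTerm s a b i (g i))) := by
  have hq : (Fintype.card F : ℂ) ≠ 0 := Nat.cast_ne_zero.2 Fintype.card_ne_zero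
  have hsum : ∑ g : ι → F × F, cbias χ (fun x => eval x (∑ i, shiftedTerm s a b i (g i))) =
      (Fintype.card F : ℂ) ^ Fintype.card ι := by
    simp only [cbias, ← Finset.mul_sum, sum_sum_addChar_eval_sum_shiftedTerm hχ b hdeg hlin,
      Fintype.card_fun]
    push_cast
    field_simp
  have hle : ∑ _g : ι → F × F, ((Fintype.card F : ℝ) ^ Fintype.card ι)⁻¹ ≤
      ∑ g : ι → F × F, bias χ (fun x => eval x (∑ i, shiftedTerm s a b i (g i))) :=
    calc ∑ _g : ι → F × F, ((Fintype.card F : ℝ) ^ Fintype.card ι)⁻¹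
        = ‖(Fintype.card F : ℂ) ^ Fintype.card ι‖ := by
          simp only [Finset.sum_const, Finset.card_univ, Fintype.card_pi, Fintype.card_prod,
            Finset.prod_const, nsmul_eq_mul, Nat.cast_pow, Nat.cast_mul, norm_pow,
            RCLike.norm_natCast]
          field_simp
          ring
      _ ≤ _ := hsum ▸ norm_sum_le _ _
  obtain ⟨g, -, hg⟩ := Finset.exists_le_of_sum_le Finset.univ_nonempty hle
  exact ⟨g, hg⟩

end Averaging

lemma totalDegree_mul_sub_shiftedTerm_le {F σ ι : Type*} [Field F] {k : ℕ} (hk : 3 ≤ k)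
    {s : ι → Prop} [DecidablePred s] {a b : ι → MvPolynomial σ F} {i : ι} (u : F × F)
    (ha : 1 ≤ (a i).totalDegree) (hab : (a i).totalDegree ≤ (b i).totalDegree)
    (habk : (a i * b i).totalDegree ≤ k)
    (hs : s i ↔ (a i).totalDegree = 1 ∧ (a i * b i).totalDegree = k) :
    (a i * b i - shiftedTerm s a b i u).totalDegree ≤ k - 2 := by
  have ha₀ : a i ≠ 0 := by rintro h; simp [h] at ha
  have hb₀ : b i ≠ 0 := by rintro h; simp [h] at hab; omega
  rw [totalDegree_mul_of_isDomain ha₀ hb₀] at habk hs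
  unfold shiftedTerm
  split_ifs with hsi
  · have h : a i * b i - a i * (b i - C u.1) = u.1 • a i := by rw [smul_eq_C_mul]; ring
    rw [h]
    exact (totalDegree_smul_le _ _).trans (by have := hs.1 hsi; omega)
  · have h : a i * b i - (a i - C u.1) * (b i - C u.2) =
        u.2 • a i + u.1 • b i - C (u.1 * u.2) := by
      simp only [smul_eq_C_mul, C_mul]; ring
    rw [h]
    refine (totalDegree_sub _ _).trans
      (max_le ((totalDegree_add _ _).trans (max_le ?_ ?_)) (by rw [totalDegree_C]; omega))
    · exact (totalDegree_smul_le _ _).trans (by omega)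
    · exact (totalDegree_smul_le _ _).trans (by rw [hs] at hsi; omega)

lemma hasRkStarDecomp_of_rkStar_eq {F : Type*} [Field F] {n : ℕ} {f : MvPolynomial (Fin n) F}
    {r : ℕ} (hr : rkStar f = r) : HasRkStarDecomp f r := by
  have hne : {N : ℕ∞ | ∃ m : ℕ, N = m ∧ HasRkStarDecomp f m}.Nonempty := by
    by_contra h
    rw [Set.not_nonempty_iff_eq_empty] at h
    rw [rkStar, h, sInf_empty] at hr
    exact ENat.top_ne_natCast r hr
  obtain ⟨m, hm, hdec⟩ := csInf_mem hne
  rw [← rkStar, hr, Nat.cast_inj] at hm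
  rwa [hm]

theorem stmt9 {F : Type*} [Field F] [Fintype F] {n : ℕ} (χ : AddChar F ℂ) (hχ : χ ≠ 1)
    (k r : ℕ) (hk : 3 ≤ k) (f : MvPolynomial (Fin n) F)
    (hdeg : f.totalDegree = k) (hr : rkStar f = (r : ℕ∞)) :
    ∃ P : MvPolynomial (Fin n) F, P.totalDegree ≤ k - 2 ∧
      ((Fintype.card F : ℝ) ^ (2 * r))⁻¹ ≤ bias χ (fun x => eval x (f - P)) := by
  classical
  obtain ⟨a, b, hf, ha, hab, habf, hlin⟩ := hasRkStarDecomp_of_rkStar_eq hr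
  let s i := (a i).totalDegree = 1 ∧ (a i * b i).totalDegree = f.totalDegree
  obtain ⟨g, hg⟩ := exists_le_bias_sum_shiftedTerm hχ (s := s) b (fun i hi => hi.1.le) hlin
  refine ⟨∑ i, (a i * b i - shiftedTerm s a b i (g i)), ?_, ?_⟩
  · refine (totalDegree_finsetSum _ _).trans (Finset.sup_le fun i _ => ?_)
    exact totalDegree_mul_sub_shiftedTerm_le hk _ (ha i) (hab i) (hdeg ▸ habf i) (hdeg ▸ Iff.rfl)
  · rw [Finset.sum_sub_distrib, ← hf, sub_sub_cancel]
    refine le_trans ?_ hg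
    rw [Fintype.card_fin]
    exact inv_anti₀ (by positivity)
      (pow_le_pow_right₀ (Nat.one_le_cast.2 Fintype.card_pos) (by omega))
end

section
/- (Iterated discrete derivative via semi-surjections) Let F be a field, let f : F^n → F be the monomial f(x) = ∏_{j=1}^k x_{i_j} for indices i_1, …, i_k ∈ {1,…,n}, and let d ≥ 0. Then for all x^(1), …, x^(d+1) ∈ F^n, Δ^d_{(x^(1),…,x^(d))} f(x^(d+1)) = Σ_φ ∏_{j=1}^k x^{(φ(j))}_{i_j}, where the sum ranges over all functions φ : {1,…,k} → {1,…,d+1} whose image contains {1,…,d}. -/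
open MvPolynomial

/-!
Expanding the `d` differences gives the inclusion–exclusion formula
`Δ^d_v f(w) = Σ_{S ⊆ [d]} (-1)^{d-|S|} f(w + Σ_{t ∈ S} v_t)`, with `S` encoded by its
indicator `ε : Fin d → Bool`. For the monomial, `f(w + Σ_{t ∈ S} v_t)` is the sum over all
`φ : [k] → [d+1]` whose image meets `[d]` inside `S` of `∏_j u_{φ(j)}(i_j)`, where
`u = (v_1, …, v_d, w)`. Exchanging the sums, the coefficient of `φ` is
`Σ_{S ⊇ im φ ∩ [d]} (-1)^{d-|S|}`, which factors over `t ∈ [d]` and vanishes unless every `t`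
is hit by `φ`.
-/

open Finset

theorem iterDDeriv_eq_sum_bool {V R : Type*} [AddCommGroup V] [CommRing R] (d : ℕ)
    (v : Fin d → V) (f : V → R) (w : V) :
    iterDDeriv d v f w = ∑ ε : Fin d → Bool,
      (∏ t, if ε t then (1 : R) else -1) * f (w + ∑ t, if ε t then v t else 0) := by
  induction d generalizing w with
  | zero => simp [iterDDeriv]
  | succ d ih =>
    rw [iterDDeriv, discDeriv, ih, ih, ← Equiv.sum_comp (Fin.snocEquiv fun _ => Bool),
      Fintype.sum_prod_type, Fintype.sum_bool, sub_eq_add_neg, ← sum_neg_distrib]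
    congr 1 <;> refine sum_congr rfl fun ε _ => ?_ <;>
      simp [Fin.snocEquiv, Fin.prod_univ_castSucc, Fin.sum_univ_castSucc, add_assoc,
        add_comm (v (Fin.last d))]

theorem sum_prod_sign_mul_boole {ι R : Type*} [Fintype ι] [DecidableEq ι] [CommRing R]
    (p : ι → Prop) [DecidablePred p] :
    ∑ ε : ι → Bool, (∏ t, if ε t then (1 : R) else -1) * (if ∀ t, p t → ε t then 1 else 0)
      = if ∀ t, p t then 1 else 0 := by
  have hfactor (t : ι) :
      ∑ b : Bool, (if b then (1 : R) else -1) * (if p t → b then 1 else 0)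
        = if p t then 1 else 0 := by
    by_cases h : p t <;> simp [h]
  simp_rw [← Fintype.prod_boole, ← prod_mul_distrib]
  rw [← Fintype.prod_sum fun t b =>
    (if b = true then (1 : R) else -1) * if p t → b = true then 1 else 0]
  simp_rw [hfactor]

theorem prod_apply_sum_eq_sum_prod {ι κ n R : Type*} [Fintype ι] [Fintype κ] [DecidableEq κ]
    [CommSemiring R] (idx : κ → n) (u : ι → n → R) :
    ∏ j, (∑ i, u i) (idx j) = ∑ φ : κ → ι, ∏ j, u (φ j) (idx j) := by
  simp only [Finset.sum_apply]
  exact Fintype.prod_sum _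

theorem prod_snoc_ite_apply {ι κ R : Type*} [Fintype κ] [CommSemiring R] {d : ℕ}
    (ε : Fin d → Bool) (v : Fin d → ι → R) (w : ι → R) (idx : κ → ι) (φ : κ → Fin (d + 1)) :
    ∏ j, (Fin.snoc (fun t => if ε t then v t else 0) w : Fin (d + 1) → ι → R) (φ j) (idx j)
      = (if ∀ t, (∃ j, φ j = t.castSucc) → ε t then 1 else 0)
          * ∏ j, (Fin.snoc v w : Fin (d + 1) → ι → R) (φ j) (idx j) := by
  split_ifs with h
  · rw [one_mul]
    refine prod_congr rfl fun j _ => ?_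
    rcases Fin.eq_castSucc_or_eq_last (φ j) with ⟨t, ht⟩ | hlast
    · simp [ht, h t ⟨j, ht⟩]
    · simp [hlast]
  · push Not at h
    obtain ⟨t, ⟨j, hj⟩, ht⟩ := h
    rw [zero_mul]
    exact prod_eq_zero (mem_univ j) (by simp [hj, ht])

theorem stmt11 {F : Type*} [Field F] {n k d : ℕ} (idx : Fin k → Fin n)
    (v : Fin d → (Fin n → F)) (w : Fin n → F) :
    iterDDeriv d v (fun x => ∏ j, x (idx j)) w
      = ∑ φ ∈ Finset.univ.filter
          (fun φ : Fin k → Fin (d + 1) => ∀ t : Fin d, ∃ j, φ j = t.castSucc),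
          ∏ j, (Fin.snoc v w : Fin (d + 1) → Fin n → F) (φ j) (idx j) := by
  have hexpand (ε : Fin d → Bool) :
      ∏ j, (w + ∑ t, if ε t then v t else 0) (idx j) = ∑ φ : Fin k → Fin (d + 1),
        ∏ j, (Fin.snoc (fun t => if ε t then v t else 0) w : Fin (d + 1) → Fin n → F)
          (φ j) (idx j) := by
    rw [← prod_apply_sum_eq_sum_prod, Fin.sum_univ_castSucc]
    simp [add_comm]
  simp_rw [iterDDeriv_eq_sum_bool, hexpand, prod_snoc_ite_apply, mul_sum]
  rw [sum_comm, sum_filter]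
  refine sum_congr rfl fun φ _ => ?_
  simp_rw [← mul_assoc, ← sum_mul]
  rw [← boole_mul]
  congr 1
  -- the two sides decide the side condition by different `Decidable` instances
  convert sum_prod_sign_mul_boole (fun t : Fin d => ∃ j, φ j = t.castSucc)
end

section
/- Let F be a field and let f : F^n → F be the monomial f(x) = ∏_{j=1}^k x_{i_j} for indices i_1, …, i_k ∈ {1,…,n}. Then for all x^(1), …, x^(k) ∈ F^n and every base point y ∈ F^n, Δ^k_{(x^(1),…,x^(k))} f(y) = Σ_{π ∈ S_k} ∏_{j=1}^k x^{(π(j))}_{i_j}, where S_k is the set of permutations of {1,…,k}; in particular the value is independent of y. -/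
/-! Inclusion–exclusion writes `Δ^d_v f y` as the signed sum of `f (y + ∑_{i ∈ S} v i)` over
`S ⊆ Fin d`. For `f = ∏ j, L j` with additive `L j`, expanding each factor
`L j y + ∑_{i ∈ S} L j (v i)` indexes the terms by choice functions `p : ι → Option (Fin d)`,
and the signed sum over `S` kills every `p` that misses some direction. With `k` factors and
`k` directions, the choice functions hitting every direction are the permutations. -/

open MvPolynomial

open Finset

theorem iterDDeriv_eq_sum_signed_shift {V F : Type*} [AddCommMonoid V] [AddCommGroup F]
    (d : ℕ) (v : Fin d → V) (f : V → F) (y : V) :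
    iterDDeriv d v f y = ∑ ε : Fin d → Bool,
      (∏ i, if ε i then (1 : ℤ) else -1) • f (y + ∑ i, if ε i then v i else 0) := by
  induction d generalizing y with
  | zero => simp [iterDDeriv]
  | succ d ih =>
    change iterDDeriv d _ f (y + v (Fin.last d)) - iterDDeriv d _ f y = _
    rw [ih, ih, ← (Fin.snocEquiv fun _ => Bool).sum_comp, Fintype.sum_prod_type,
      Fintype.sum_bool, sub_eq_add_neg, ← sum_neg_distrib]
    simp only [Fin.snocEquiv, Equiv.coe_fn_mk, Fin.prod_univ_castSucc, Fin.sum_univ_castSucc,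
      Fin.snoc_castSucc, Fin.snoc_last, if_true, Bool.false_eq_true, if_false, mul_one,
      mul_neg_one, neg_smul, add_zero, add_assoc, add_comm (v (Fin.last d))]

theorem prod_add_sum_eq_sum_option {ι κ R : Type*} [Fintype ι] [DecidableEq ι] [Fintype κ]
    [CommSemiring R] (a : ι → R) (b : ι → κ → R) :
    ∏ j, (a j + ∑ i, b j i) = ∑ p : ι → Option κ, ∏ j, (p j).elim (a j) (b j) := by
  have h : ∀ j, a j + ∑ i, b j i = ∑ o : Option κ, o.elim (a j) (b j) :=
    fun j => (Fintype.sum_option fun o => o.elim (a j) (b j)).symm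
  simp only [h]
  exact Fintype.prod_sum _

theorem sum_sign_mul_prod_indicator {ι κ R : Type*} [Fintype ι] [Fintype κ] [DecidableEq κ]
    [CommRing R] (p : ι → Option κ) [Decidable (∀ i, ∃ j, p j = some i)] :
    ∑ ε : κ → Bool, (∏ i, if ε i then (1 : R) else -1) *
        ∏ j, (p j).elim 1 (fun i => if ε i then 1 else 0)
      = if ∀ i, ∃ j, p j = some i then 1 else 0 := by
  have hfactor : ∀ ε : κ → Bool, ∏ j, (p j).elim (1 : R) (fun i => if ε i then 1 else 0)
      = ∏ i, if (∃ j, p j = some i) → ε i then 1 else 0 := by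
    intro ε
    rw [prod_boole, ← prod_congr rfl fun j _ =>
      (show (if ∀ i, p j = some i → ε i then (1 : R) else 0) = (p j).elim 1 _ by
        cases p j <;> simp), prod_boole]
    simp only [mem_univ, true_implies, forall_exists_index]
    exact if_congr forall_comm rfl rfl
  calc _ = ∑ ε : κ → Bool, ∏ i, (if ε i then (1 : R) else -1) *
        if (∃ j, p j = some i) → ε i then 1 else 0 := by
        simp only [hfactor, prod_mul_distrib]
    _ = ∏ i, ∑ b : Bool, (if b then (1 : R) else -1) *
        if (∃ j, p j = some i) → b then 1 else 0 :=
        (Fintype.prod_sum (κ := fun _ => Bool) fun i b =>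
          (if b then (1 : R) else -1) * if (∃ j, p j = some i) → b then 1 else 0).symm
    _ = ∏ i, if ∃ j, p j = some i then (1 : R) else 0 := by
        refine prod_congr rfl fun i _ => ?_
        by_cases h : ∃ j, p j = some i <;> simp [h]
    _ = _ := by simp [prod_boole]

theorem exists_perm_of_forall_exists_eq_some {α : Type*} [Finite α] {p : α → Option α}
    (hp : ∀ i, ∃ j, p j = some i) : ∃ π : Equiv.Perm α, p = some ∘ π := by
  choose u hu using hp
  have hu_inj : u.Injective := fun a b hab =>
    Option.some_injective _ (by rw [← hu a, ← hu b, hab])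
  let σ := Equiv.ofBijective u (Finite.injective_iff_bijective.mp hu_inj)
  refine ⟨σ.symm, funext fun j => ?_⟩
  have h := hu (σ.symm j)
  rwa [show u (σ.symm j) = j from σ.apply_symm_apply j] at h

theorem sum_filter_forall_exists_eq_some {α M : Type*} [Fintype α] [DecidableEq α]
    [DecidablePred fun p : α → Option α => ∀ i, ∃ j, p j = some i] [AddCommMonoid M]
    (g : (α → Option α) → M) :
    ∑ p with ∀ i, ∃ j, p j = some i, g p = ∑ π : Equiv.Perm α, g (some ∘ π) := by
  have himage : ({p | ∀ i, ∃ j, p j = some i} : Finset (α → Option α))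
      = univ.image fun π : Equiv.Perm α => some ∘ π := by
    ext p
    simp only [mem_filter, mem_univ, true_and, mem_image]
    refine ⟨fun hp => ?_, ?_⟩
    · obtain ⟨π, rfl⟩ := exists_perm_of_forall_exists_eq_some hp
      exact ⟨π, rfl⟩
    · rintro ⟨π, rfl⟩ i
      exact ⟨π.symm i, by simp⟩
  rw [himage, sum_image]
  exact fun π _ π' _ h => Equiv.ext fun j => Option.some_injective _ (congrFun h j)

theorem iterDDeriv_prod_addMonoidHom {V R ι : Type*} [AddCommMonoid V] [CommRing R] [Fintype ι]
    [DecidableEq ι] {d : ℕ}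
    [DecidablePred fun p : ι → Option (Fin d) => ∀ i, ∃ j, p j = some i]
    (L : ι → V →+ R) (v : Fin d → V) (y : V) :
    iterDDeriv d v (fun x => ∏ j, L j x) y
      = ∑ p : ι → Option (Fin d) with ∀ i, ∃ j, p j = some i,
          ∏ j, (p j).elim (L j y) (fun i => L j (v i)) := by
  have hexpand : ∀ ε : Fin d → Bool, ∏ j, L j (y + ∑ i, if ε i then v i else 0)
      = ∑ p : ι → Option (Fin d), (∏ j, (p j).elim (L j y) (fun i => L j (v i))) *
          ∏ j, (p j).elim 1 (fun i => if ε i then 1 else 0) := by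
    intro ε
    simp only [map_add, map_sum, apply_ite (L _), map_zero]
    rw [prod_add_sum_eq_sum_option]
    refine sum_congr rfl fun p _ => ?_
    rw [← prod_mul_distrib]
    refine prod_congr rfl fun j _ => ?_
    cases p j <;> simp
  rw [iterDDeriv_eq_sum_signed_shift]
  simp only [zsmul_eq_mul, Int.cast_prod, apply_ite Int.cast, Int.cast_one, Int.cast_neg,
    hexpand, mul_sum]
  rw [sum_comm, sum_filter]
  refine sum_congr rfl fun p _ => ?_
  calc _ = (∑ ε : Fin d → Bool, (∏ i, if ε i then (1 : R) else -1) *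
          ∏ j, (p j).elim 1 (fun i => if ε i then 1 else 0)) *
          ∏ j, (p j).elim (L j y) (fun i => L j (v i)) := by
        rw [sum_mul]
        exact sum_congr rfl fun ε _ => by ring
    _ = _ := by rw [sum_sign_mul_prod_indicator, ite_mul, one_mul, zero_mul]

theorem stmt12 {F : Type*} [Field F] {n k : ℕ} (idx : Fin k → Fin n)
    (v : Fin k → (Fin n → F)) (y : Fin n → F) :
    iterDDeriv k v (fun x => ∏ j, x (idx j)) y
      = ∑ π : Equiv.Perm (Fin k), ∏ j, v (π j) (idx j) := by
  refine (iterDDeriv_prod_addMonoidHom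
    (fun j => Pi.evalAddMonoidHom (fun _ => F) (idx j)) v y).trans ?_
  rw [sum_filter_forall_exists_eq_some]
  rfl
end

section
/- Let F be a field with char(F) ≠ 2, let d ≥ 1, and let g : F^n → F be a form of degree d+1 with polarization g̃ : (F^n)^{d+1} → F. Then for all v⃗ = (v^(1),…,v^(d)) ∈ (F^n)^d and x ∈ F^n, Δ^d_{v⃗} g(x) = g̃(v^(1),…,v^(d), x'), where x' = x + (1/2)·Σ_{t=1}^d v^(t). -/
open MvPolynomial

/-!
Translating a polynomial by `w` and subtracting the original lowers its total degree, so
`h := Δ^d_v g` is a polynomial function of degree at most one and `Δ_a h` is constant.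
With `c = ½ Σ v`, the right-hand side is therefore `Δ_{x + c} h (-c) = h x - h (-c)`.
Finally `h (-c) = 0`: the reflection `z ↦ -z` carries `Δ^d_v` at `p` to `(-1)^d Δ^d_v` at
`-p - Σ v`, which fixes `-c`, while `g (-z) = (-1)^(d+1) g z` has the opposite sign.
-/

namespace MvPolynomial

variable {σ R : Type*}

section CommSemiring

variable [CommSemiring R]

noncomputable def translate (w : σ → R) : MvPolynomial σ R →ₐ[R] MvPolynomial σ R :=
  aeval fun i => X i + C (w i)

theorem eval_translate (w z : σ → R) (p : MvPolynomial σ R) :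
    eval z (translate w p) = eval (z + w) p := by
  change aeval z (aeval _ p) = aeval (z + w) p
  rw [comp_aeval_apply]
  simp [Pi.add_def]

theorem totalDegree_X_le (i : σ) : (X i : MvPolynomial σ R).totalDegree ≤ 1 :=
  (totalDegree_monomial_le _ _).trans (by simp)

theorem totalDegree_prod_X_le (M : Multiset σ) :
    ((M.map X).prod : MvPolynomial σ R).totalDegree ≤ M.card := by
  induction M using Multiset.induction_on with
  | empty => simp
  | cons i M ih =>
    rw [Multiset.map_cons, Multiset.prod_cons, Multiset.card_cons, add_comm]
    exact (totalDegree_mul _ _).trans (add_le_add (totalDegree_X_le i) ih)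

theorem prod_map_X_toMultiset (s : σ →₀ ℕ) :
    ((Finsupp.toMultiset s).map X).prod = monomial s (1 : R) := by
  induction s using Finsupp.induction with
  | zero => simp
  | single_add a b s ha hb ih =>
    rw [map_add, Multiset.map_add, Multiset.prod_add, ih, Finsupp.toMultiset_single,
      Multiset.map_nsmul, Multiset.prod_nsmul, Multiset.map_singleton, Multiset.prod_singleton,
      X_pow_eq_monomial, monomial_mul, one_mul]

theorem IsHomogeneous.eval_smul {n : ℕ} {φ : MvPolynomial σ R} (hφ : φ.IsHomogeneous n)
    (c : R) (z : σ → R) : eval (c • z) φ = c ^ n * eval z φ := by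
  rw [eval_eq, eval_eq, Finset.mul_sum]
  refine Finset.sum_congr rfl fun s hs => ?_
  simp only [Pi.smul_apply, smul_eq_mul, mul_pow, Finset.prod_mul_distrib,
    Finset.prod_pow_eq_pow_sum, ← hφ.degree_eq_sum_deg_support hs]
  ring

end CommSemiring

section CommRing

variable [CommRing R]

theorem totalDegree_translate_prod_X_sub_le (w : σ → R) (M : Multiset σ) {k : ℕ}
    (hM : M.card ≤ k + 1) :
    (translate w (M.map X).prod - (M.map X).prod).totalDegree ≤ k := by
  induction M using Multiset.induction_on generalizing k with
  | empty => simp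
  | cons i M ih =>
    rw [Multiset.card_cons, add_le_add_iff_right] at hM
    rw [Multiset.map_cons, Multiset.prod_cons, map_mul, translate, aeval_X, ← translate,
      show (X i + C (w i)) * translate w (M.map X).prod - X i * (M.map X).prod
        = (X i + C (w i)) * (translate w (M.map X).prod - (M.map X).prod)
          + C (w i) * (M.map X).prod by ring]
    rcases k with _ | k
    · obtain rfl : M = 0 := Multiset.card_eq_zero.mp (Nat.le_zero.mp hM)
      simp
    · have hX : (X i + C (w i) : MvPolynomial σ R).totalDegree ≤ 1 :=
        (totalDegree_add _ _).trans (by simp [totalDegree_X_le])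
      have hdiff := ih (k := k) hM
      have hprod := totalDegree_prod_X_le (R := R) M
      refine (totalDegree_add _ _).trans (max_le ?_ ?_)
      · exact (totalDegree_mul _ _).trans (by omega)
      · exact (totalDegree_mul _ _).trans (by rw [totalDegree_C]; omega)

theorem totalDegree_translate_sub_le (w : σ → R) {p : MvPolynomial σ R} {k : ℕ}
    (hp : p.totalDegree ≤ k + 1) : (translate w p - p).totalDegree ≤ k := by
  conv_lhs => rw [p.as_sum]
  rw [map_sum, ← Finset.sum_sub_distrib]
  refine totalDegree_finsetSum_le fun s hs => ?_
  rw [← mul_one (coeff s p), ← C_mul_monomial, map_mul, translate, aeval_C, algebraMap_eq,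
    ← translate, ← mul_sub, ← prod_map_X_toMultiset]
  refine (totalDegree_mul _ _).trans ?_
  rw [totalDegree_C, zero_add]
  exact totalDegree_translate_prod_X_sub_le w _
    ((Finsupp.card_toMultiset s).trans_le ((le_totalDegree hs).trans hp))

theorem IsHomogeneous.eval_neg {n : ℕ} {φ : MvPolynomial σ R} (hφ : φ.IsHomogeneous n)
    (z : σ → R) : eval (-z) φ = (-1) ^ n * eval z φ := by
  rw [← hφ.eval_smul, neg_one_smul]

end CommRing

end MvPolynomial

theorem iterDDeriv_succ_snoc {V F : Type*} [Add V] [Sub F] (d : ℕ) (v : Fin d → V) (w : V)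
    (f : V → F) : iterDDeriv (d + 1) (Fin.snoc v w) f = discDeriv w (iterDDeriv d v f) := by
  simp [iterDDeriv]

theorem iterDDeriv_const_mul {V F : Type*} [Add V] [Ring F] (a : F) (f : V → F) :
    ∀ (d : ℕ) (v : Fin d → V),
      iterDDeriv d v (fun z => a * f z) = fun z => a * iterDDeriv d v f z
  | 0, _ => rfl
  | d + 1, v => by
    funext z
    simp only [iterDDeriv, discDeriv, iterDDeriv_const_mul a f d, mul_sub]

theorem iterDDeriv_comp_neg {V F : Type*} [AddCommGroup V] [Ring F] (f : V → F) :
    ∀ (d : ℕ) (v : Fin d → V) (x : V),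
      iterDDeriv d v (fun z => f (-z)) x = (-1) ^ d * iterDDeriv d v f (-x - ∑ t, v t)
  | 0, _, x => by simp [iterDDeriv]
  | d + 1, v, x => by
    simp only [iterDDeriv, discDeriv, iterDDeriv_comp_neg f d, Fin.sum_univ_castSucc]
    rw [show -(x + v (Fin.last d)) - ∑ t : Fin d, v t.castSucc
      = -x - (∑ t : Fin d, v t.castSucc + v (Fin.last d)) by abel,
      show -x - ∑ t : Fin d, v t.castSucc
      = -x - (∑ t : Fin d, v t.castSucc + v (Fin.last d)) + v (Fin.last d) by abel,
      pow_succ, mul_assoc, neg_one_mul, neg_sub, mul_sub]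

theorem iterDDeriv_neg_half_sum_eq_zero {V F : Type*} [AddCommGroup V] [Field F] [Module F V]
    (h2 : (2 : F) ≠ 0) {d : ℕ} {f : V → F} (hf : ∀ z, f (-z) = (-1) ^ (d + 1) * f z)
    (v : Fin d → V) : iterDDeriv d v f (-((2 : F)⁻¹ • ∑ t, v t)) = 0 := by
  set c := (2 : F)⁻¹ • ∑ t, v t
  have hc : -(-c) - ∑ t, v t = -c := by
    have hcc : c + c = ∑ t, v t := by
      rw [← two_smul F c, smul_smul, mul_inv_cancel₀ h2, one_smul]
    rw [neg_neg, ← hcc]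
    abel
  have key := iterDDeriv_comp_neg f d v (-c)
  rw [funext hf, iterDDeriv_const_mul, hc] at key
  have h : (2 * (-1) ^ d) * iterDDeriv d v f (-c) = 0 := by linear_combination -key
  exact (mul_eq_zero.mp h).resolve_left
    (mul_ne_zero h2 (pow_ne_zero _ (neg_ne_zero.mpr one_ne_zero)))

def IsPolynomialOfDegreeLE {σ R : Type*} [CommRing R] (k : ℕ) (f : (σ → R) → R) : Prop :=
  ∃ p : MvPolynomial σ R, p.totalDegree ≤ k ∧ f = fun z => eval z p

namespace IsPolynomialOfDegreeLE

variable {σ R : Type*} [CommRing R] {f : (σ → R) → R}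

theorem discDeriv {k : ℕ} (hf : IsPolynomialOfDegreeLE (k + 1) f) (w : σ → R) :
    IsPolynomialOfDegreeLE k (_root_.discDeriv w f) := by
  obtain ⟨p, hp, rfl⟩ := hf
  refine ⟨translate w p - p, totalDegree_translate_sub_le w hp, funext fun z => ?_⟩
  rw [map_sub, eval_translate]
  rfl

theorem iterDDeriv {k : ℕ} :
    ∀ {d : ℕ}, IsPolynomialOfDegreeLE (k + d) f → ∀ v : Fin d → σ → R,
      IsPolynomialOfDegreeLE k (_root_.iterDDeriv d v f)
  | 0, hf, _ => hf
  | d + 1, hf, v => (iterDDeriv (k := k + 1) (by rwa [add_right_comm]) _).discDeriv _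

theorem apply_eq_apply (hf : IsPolynomialOfDegreeLE 0 f) (z z' : σ → R) : f z = f z' := by
  obtain ⟨p, hp, rfl⟩ := hf
  rw [totalDegree_eq_zero_iff_eq_C.mp (Nat.le_zero.mp hp)]
  simp

theorem discDeriv_apply_eq_apply (hf : IsPolynomialOfDegreeLE 1 f) (w z z' : σ → R) :
    _root_.discDeriv w f z = _root_.discDeriv w f z' :=
  (hf.discDeriv w).apply_eq_apply z z'

end IsPolynomialOfDegreeLE

theorem stmt15_general {F : Type*} [Field F] (hchar : ringChar F ≠ 2) {n d : ℕ}
    (g : MvPolynomial (Fin n) F) (hg : g.IsHomogeneous (d + 1))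
    (v : Fin d → (Fin n → F)) (x y : Fin n → F) :
    iterDDeriv d v (fun z => eval z g) x
      = iterDDeriv (d + 1) (Fin.snoc v (x + (2 : F)⁻¹ • ∑ t, v t)) (fun z => eval z g) y := by
  set c := (2 : F)⁻¹ • ∑ t, v t
  have haffine : IsPolynomialOfDegreeLE 1 (iterDDeriv d v fun z => eval z g) :=
    IsPolynomialOfDegreeLE.iterDDeriv ⟨g, by rw [add_comm]; exact hg.totalDegree_le, rfl⟩ v
  have hcenter : iterDDeriv d v (fun z => eval z g) (-c) = 0 :=
    iterDDeriv_neg_half_sum_eq_zero (Ring.two_ne_zero hchar) hg.eval_neg v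
  rw [iterDDeriv_succ_snoc, haffine.discDeriv_apply_eq_apply _ y (-c), discDeriv, hcenter,
    sub_zero, add_comm x c, neg_add_cancel_left]

theorem stmt15 {F : Type*} [Field F] (hchar : ringChar F ≠ 2) {n d : ℕ} (hd : 1 ≤ d)
    (g : MvPolynomial (Fin n) F) (hg : g.IsHomogeneous (d + 1))
    (v : Fin d → (Fin n → F)) (x y : Fin n → F) :
    iterDDeriv d v (fun z => eval z g) x
      = iterDDeriv (d + 1) (Fin.snoc v (x + (2 : F)⁻¹ • ∑ t, v t)) (fun z => eval z g) y :=
  stmt15_general hchar g hg v x y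
end
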